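/- arXiv:1608.04786 — 6 statements merged into one kernel-verified Lean document; each statement's English description precedes it below -/
import Mathlib

section
/- Let 𝒜 be an abelian category. Let 0 → A → E → C → 0 be a non-split short exact sequence and 0 → A → F → D → 0 a short exact sequence in 𝒜. Assume that every nonzero endomorphism of A is an isomorphism, that Hom(A,D) = 0, Hom(C,A) = 0 and Hom(C,D) = 0. Then Hom(E,F) = 0, i.e. every morphism E → F is zero. -/
/-!
A morphism `α : E ⟶ F` composed with `F ⟶ D` kills `A` and then factors through `C`, so it
vanishes; hence `α` lifts to `u : E ⟶ A`. The endomorphism `i ≫ u` of `A` cannot be an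
isomorphism, since its inverse would turn `u` into a retraction of `i` and split `E`; so it is
zero, `u` factors through `C`, and `Hom(C, A) = 0` forces `u = 0`.
-/

open CategoryTheory Limits

namespace CategoryTheory.ShortComplex

variable {𝒜 : Type*} [Category 𝒜] [Abelian 𝒜] {S : ShortComplex 𝒜}

lemma Exact.eq_zero_of_f_comp_eq_zero (hS : S.Exact) [Epi S.g] {Y : 𝒜}
    (hY : ∀ φ : S.X₃ ⟶ Y, φ = 0) {k : S.X₂ ⟶ Y} (hk : S.f ≫ k = 0) : k = 0 := by
  rw [← hS.g_desc k hk, hY (hS.desc k hk), comp_zero]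

lemma ShortExact.not_isIso_f_comp (hS : S.ShortExact)
    (hnonsplit : ∀ s : S.X₃ ⟶ S.X₂, ¬ s ≫ S.g = 𝟙 S.X₃) (u : S.X₂ ⟶ S.X₁) :
    ¬ IsIso (S.f ≫ u) := by
  intro hu
  have f_r : S.f ≫ u ≫ inv (S.f ≫ u) = 𝟙 S.X₁ := by
    rw [← Category.assoc, IsIso.hom_inv_id]
  have splitting := Splitting.ofExactOfRetraction S hS.exact _ f_r hS.epi_g
  exact hnonsplit splitting.s splitting.s_g

lemma ShortExact.hom_to_X₁_eq_zero (hS : S.ShortExact)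
    (hnonsplit : ∀ s : S.X₃ ⟶ S.X₂, ¬ s ≫ S.g = 𝟙 S.X₃)
    (hX₁ : ∀ φ : S.X₁ ⟶ S.X₁, φ ≠ 0 → IsIso φ) (hX₃X₁ : ∀ φ : S.X₃ ⟶ S.X₁, φ = 0)
    (u : S.X₂ ⟶ S.X₁) : u = 0 := by
  have := hS.epi_g
  have hfu : S.f ≫ u = 0 := by
    by_contra h
    exact hS.not_isIso_f_comp hnonsplit u (hX₁ _ h)
  exact hS.exact.eq_zero_of_f_comp_eq_zero hX₃X₁ hfu

end CategoryTheory.ShortComplex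

/-- The 'distinct parameters' case of Lemma 2.4: if `0 → A → E → C → 0` is a non-split
short exact sequence, `0 → A → F → D → 0` is a short exact sequence, every nonzero
endomorphism of `A` is an isomorphism, and `Hom(A,D) = 0`, `Hom(C,A) = 0`, `Hom(C,D) = 0`,
then `Hom(E,F) = 0`. -/
theorem stmt_0 {𝒜 : Type*} [Category 𝒜] [Abelian 𝒜]
    {A E C F D : 𝒜}
    (i : A ⟶ E) (p : E ⟶ C) (hip : i ≫ p = 0)
    (j : A ⟶ F) (q : F ⟶ D) (hjq : j ≫ q = 0)
    (hE : (ShortComplex.mk i p hip).ShortExact)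
    (hF : (ShortComplex.mk j q hjq).ShortExact)
    (hnonsplit : ∀ s : C ⟶ E, ¬ (s ≫ p = 𝟙 C))
    (hA : ∀ φ : A ⟶ A, φ ≠ 0 → IsIso φ)
    (hAD : ∀ φ : A ⟶ D, φ = 0)
    (hCA : ∀ φ : C ⟶ A, φ = 0)
    (hCD : ∀ φ : C ⟶ D, φ = 0) :
    ∀ α : E ⟶ F, α = 0 := by
  intro α
  have := hE.epi_g
  have := hF.mono_f
  have hαq : α ≫ q = 0 :=
    hE.exact.eq_zero_of_f_comp_eq_zero hCD (k := α ≫ q) (hAD _)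
  rw [← hF.exact.lift_f α hαq, hE.hom_to_X₁_eq_zero hnonsplit hA hCA (hF.exact.lift α hαq),
    zero_comp]
end

section
/- Let 𝒜 be an abelian category. Let 0 → A → E → C → 0 and 0 → A → F → C → 0 be two non-split short exact sequences in 𝒜. Assume that every nonzero endomorphism of A is an isomorphism, that every nonzero endomorphism of C is an isomorphism, and that Hom(A,C) = 0 and Hom(C,A) = 0. Then every nonzero morphism α : E → F is an isomorphism. -/
/-!
Since `Hom(A, C) = 0`, the morphism `α` extends to a morphism of short exact sequences with
outer components `φ : A ⟶ A` and `ψ : C ⟶ C`. If `φ = 0`, then `α` factors through `E ⟶ C`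
as `β : C ⟶ F` with `β ≫ q = ψ`: an invertible `ψ` would split `F`, while `ψ = 0` makes `β`
factor through `Hom(C, A) = 0`. If `ψ = 0`, then `α` factors through `A ⟶ F`, and the invertible
`φ` turns this into a retraction of `A ⟶ E`. Hence `φ` and `ψ` are isomorphisms, and so is `α`
by the five lemma.
-/

open CategoryTheory

namespace CategoryTheory.ShortComplex

variable {𝒞 : Type*} [Category 𝒞] [Preadditive 𝒞] [Balanced 𝒞] {S T : ShortComplex 𝒞}

noncomputable def homOfτ₂ (hS : S.Exact) [Epi S.g] (hT : T.Exact) [Mono T.f]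
    (α : S.X₂ ⟶ T.X₂) (hα : S.f ≫ α ≫ T.g = 0) : S ⟶ T where
  τ₁ := hT.lift (S.f ≫ α) (by rwa [Category.assoc])
  τ₂ := α
  τ₃ := hS.desc (α ≫ T.g) hα
  comm₁₂ := hT.lift_f _ _
  comm₂₃ := (hS.g_desc _ _).symm

lemma exists_desc_of_τ₁_eq_zero (τ : S ⟶ T) (hS : S.Exact) [Epi S.g] (h₁ : τ.τ₁ = 0) :
    ∃ β : S.X₃ ⟶ T.X₂, S.g ≫ β = τ.τ₂ ∧ β ≫ T.g = τ.τ₃ := by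
  obtain ⟨β, hβ⟩ := hS.desc' τ.τ₂ (by rw [← τ.comm₁₂, h₁, Limits.zero_comp])
  refine ⟨β, hβ, ?_⟩
  rw [← cancel_epi S.g, reassoc_of% hβ, τ.comm₂₃]

lemma exists_section_of_τ₁_eq_zero (τ : S ⟶ T) (hS : S.Exact) [Epi S.g] (h₁ : τ.τ₁ = 0)
    [IsIso τ.τ₃] : ∃ s : T.X₃ ⟶ T.X₂, s ≫ T.g = 𝟙 T.X₃ := by
  obtain ⟨β, -, hβ⟩ := exists_desc_of_τ₁_eq_zero τ hS h₁
  exact ⟨inv τ.τ₃ ≫ β, by simp [hβ]⟩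

lemma τ₂_eq_zero_of_τ₁_eq_zero_of_τ₃_eq_zero (τ : S ⟶ T) (hS : S.Exact) [Epi S.g]
    (hT : T.Exact) [Mono T.f] (h₁ : τ.τ₁ = 0) (h₃ : τ.τ₃ = 0)
    (hHom : ∀ φ : S.X₃ ⟶ T.X₁, φ = 0) : τ.τ₂ = 0 := by
  obtain ⟨β, hβ, hβg⟩ := exists_desc_of_τ₁_eq_zero τ hS h₁
  obtain ⟨γ, hγ⟩ := hT.lift' β (hβg.trans h₃)
  rw [← hβ, ← hγ, hHom γ, Limits.zero_comp, Limits.comp_zero]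

lemma exists_retraction_of_τ₃_eq_zero (τ : S ⟶ T) (hT : T.Exact) [Mono T.f] (h₃ : τ.τ₃ = 0)
    [IsIso τ.τ₁] : ∃ r : S.X₂ ⟶ S.X₁, S.f ≫ r = 𝟙 S.X₁ := by
  obtain ⟨γ, hγ⟩ := hT.lift' τ.τ₂ (by rw [τ.comm₂₃, h₃, Limits.comp_zero])
  have hfγ : S.f ≫ γ = τ.τ₁ := by
    rw [← cancel_mono T.f, Category.assoc, hγ, τ.comm₁₂]
  exact ⟨γ ≫ inv τ.τ₁, by rw [reassoc_of% hfγ, IsIso.hom_inv_id]⟩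

end CategoryTheory.ShortComplex

open ShortComplex in
/-- The 'equal parameters' case of Lemma 2.4: if `0 → A → E → C → 0` and
`0 → A → F → C → 0` are non-split short exact sequences, every nonzero endomorphism of
`A` is an isomorphism, every nonzero endomorphism of `C` is an isomorphism, and
`Hom(A,C) = 0`, `Hom(C,A) = 0`, then every nonzero morphism `E ⟶ F` is an isomorphism. -/
theorem stmt_1 {𝒜 : Type*} [Category 𝒜] [Abelian 𝒜]
    {A E C F : 𝒜}
    (i : A ⟶ E) (p : E ⟶ C) (hip : i ≫ p = 0)
    (j : A ⟶ F) (q : F ⟶ C) (hjq : j ≫ q = 0)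
    (hE : (ShortComplex.mk i p hip).ShortExact)
    (hF : (ShortComplex.mk j q hjq).ShortExact)
    (hEnonsplit : ∀ s : C ⟶ E, ¬ (s ≫ p = 𝟙 C))
    (hFnonsplit : ∀ s : C ⟶ F, ¬ (s ≫ q = 𝟙 C))
    (hA : ∀ φ : A ⟶ A, φ ≠ 0 → IsIso φ)
    (hC : ∀ φ : C ⟶ C, φ ≠ 0 → IsIso φ)
    (hAC : ∀ φ : A ⟶ C, φ = 0)
    (hCA : ∀ φ : C ⟶ A, φ = 0) :
    ∀ α : E ⟶ F, α ≠ 0 → IsIso α := by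
  intro α hα
  have := hE.epi_g
  have := hF.mono_f
  let τ := homOfτ₂ hE.exact hF.exact α (hAC _)
  have hτ₁ : τ.τ₁ ≠ 0 := by
    intro h₁
    have h₃ : τ.τ₃ = 0 := by
      by_contra h₃
      have := hC _ h₃
      obtain ⟨s, hs⟩ := exists_section_of_τ₁_eq_zero τ hE.exact h₁
      exact hFnonsplit s hs
    exact hα (τ₂_eq_zero_of_τ₁_eq_zero_of_τ₃_eq_zero τ hE.exact hF.exact h₁ h₃ hCA)
  have hτ₃ : τ.τ₃ ≠ 0 := by
    intro h₃
    have := hA _ hτ₁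
    obtain ⟨r, hr⟩ := exists_retraction_of_τ₃_eq_zero τ hF.exact h₃
    exact hEnonsplit _ (Splitting.ofExactOfRetraction _ hE.exact r hr hE.epi_g).s_g
  exact isIso₂_of_shortExact_of_isIso₁₃' τ hE hF (hA _ hτ₁) (hC _ hτ₃)
end

section
/- Let Λ be a ℤ-module equipped with a symmetric ℤ-bilinear form, written x·y. Let ℓ, m ∈ Λ and z ∈ ℤ satisfy ℓ·ℓ = 4z − 8, ℓ·ℓ > 0, and ℓ·m − m·m > z. Then ℓ and m are linearly independent over ℤ: for all integers α, β, if α·m = β·ℓ in Λ then α = 0 and β = 0. -/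
/-!
If `α • m = β • ℓ` with `α ≠ 0`, then `α²(ℓ·m − m·m) = β(α − β) ℓ·ℓ`, while `ℓ·m − m·m > z`
with `4z = ℓ·ℓ + 8`. Multiplying by four, this would give `(α − 2β)² ℓ·ℓ + 8α² < 0`, impossible
for `ℓ·ℓ > 0`. Hence `α = 0`, and then `β ℓ·ℓ = 0` forces `β = 0`.
-/

namespace LinearMap

variable {R M : Type*} [CommRing R] [AddCommGroup M] [Module R M]
  (B : M →ₗ[R] M →ₗ[R] R) {ℓ m : M} {α β : R}

lemma mul_apply_eq_of_smul_eq (h : α • m = β • ℓ) : α * B ℓ m = β * B ℓ ℓ := by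
  simpa only [map_smul, smul_eq_mul] using congrArg (B ℓ) h

lemma sq_mul_apply_self_eq_of_smul_eq (h : α • m = β • ℓ) :
    α ^ 2 * B m m = β ^ 2 * B ℓ ℓ := by
  have := congrArg (fun x => B x x) h
  simp only [map_smul, smul_apply, smul_eq_mul] at this
  linear_combination this

end LinearMap

theorem stmt_2_general {Λ : Type*} [AddCommGroup Λ] [Module ℤ Λ]
    (B : Λ →ₗ[ℤ] Λ →ₗ[ℤ] ℤ)
    (ℓ m : Λ) (z : ℤ)
    (hll : B ℓ ℓ = 4 * z - 8)
    (hpos : 0 < B ℓ ℓ)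
    (hlm : B ℓ m - B m m > z) :
    ∀ α β : ℤ, α • m = β • ℓ → α = 0 ∧ β = 0 := by
  intro α β h
  -- `•` in the statement is the `zsmul` of the group, not the smul of the given `Module ℤ Λ`.
  rw [← int_smul_eq_zsmul ‹Module ℤ Λ›, ← int_smul_eq_zsmul ‹Module ℤ Λ›] at h
  have hlin := B.mul_apply_eq_of_smul_eq h
  have hquad := B.sq_mul_apply_self_eq_of_smul_eq h
  have hα : α = 0 := by
    by_contra hα
    have hα2 : 0 < α ^ 2 := by positivity
    have hgap : α ^ 2 * z < α ^ 2 * (B ℓ m - B m m) := mul_lt_mul_of_pos_left hlm hα2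
    have hexpand : α ^ 2 * (B ℓ m - B m m) = β * (α - β) * B ℓ ℓ := by
      linear_combination α * hlin - hquad
    nlinarith [mul_nonneg (sq_nonneg (α - 2 * β)) hpos.le]
  subst hα
  have hβ : β * B ℓ ℓ = 0 := by simpa using hlin.symm
  exact ⟨rfl, (mul_eq_zero.mp hβ).resolve_right hpos.ne'⟩

/-- Final claim of Lemma 3.6: if `ℓ·ℓ = 4z − 8 > 0` and `ℓ·m − m·m > z` then `ℓ` and `m`
are linearly independent over `ℤ`. -/
theorem stmt_2 {Λ : Type*} [AddCommGroup Λ] [Module ℤ Λ]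
    (B : Λ →ₗ[ℤ] Λ →ₗ[ℤ] ℤ) (hsym : ∀ x y : Λ, B x y = B y x)
    (ℓ m : Λ) (z : ℤ)
    (hll : B ℓ ℓ = 4 * z - 8)
    (hpos : 0 < B ℓ ℓ)
    (hlm : B ℓ m - B m m > z) :
    ∀ α β : ℤ, α • m = β • ℓ → α = 0 ∧ β = 0 :=
  stmt_2_general B ℓ m z hll hpos hlm
end

section
/- Let n ≥ 0 be a natural number and set z = 2n + 3. Let α, c, x, y be integers satisfying: (i) x = z − 4 − 2c; (ii) 2α + 4y(z−2) + (z−4)² = 1; (iii) 2zα − 4c²(z−2) + 2z² = 2; (iv) 2α + 4c(z−2) + z(z−4) + 4z = 1. Then (z + 2c)² = 1, α = 2c(c+2), y = c + 2, and either c = −n−1 and x = 4n+1, or c = −n−2 and x = 4n+3. -/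
/-!
Subtracting (iii) from z·(iv) leaves (z - 2)((z + 2c)² - 1) = 0, and (ii) - (iv) leaves
4(z - 2)(y - c - 2) = 0. Since z = 2n + 3 is odd, z ≠ 2, so (z + 2c)² = 1 and y = c + 2;
then (iv) gives α. Finally z + 2c = ±1 pins down c and, through (i), x.
-/

section

variable {α c y z : ℤ}

lemma sq_add_two_mul_eq_one_of_ne_two (hz : z ≠ 2)
    (h3 : 2 * z * α - 4 * c ^ 2 * (z - 2) + 2 * z ^ 2 = 2)
    (h4 : 2 * α + 4 * c * (z - 2) + z * (z - 4) + 4 * z = 1) :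
    (z + 2 * c) ^ 2 = 1 := by
  have h : (z - 2) * ((z + 2 * c) ^ 2 - 1) = 0 := by linear_combination z * h4 - h3
  have hz' : z - 2 ≠ 0 := sub_ne_zero.mpr hz
  linear_combination (mul_eq_zero.mp h).resolve_left hz'

lemma eq_add_two_of_ne_two (hz : z ≠ 2)
    (h2 : 2 * α + 4 * y * (z - 2) + (z - 4) ^ 2 = 1)
    (h4 : 2 * α + 4 * c * (z - 2) + z * (z - 4) + 4 * z = 1) :
    y = c + 2 := by
  have h : (4 * (z - 2)) * (y - (c + 2)) = 0 := by linear_combination h2 - h4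
  have h4z : 4 * (z - 2) ≠ 0 := mul_ne_zero four_ne_zero (sub_ne_zero.mpr hz)
  exact sub_eq_zero.mp ((mul_eq_zero.mp h).resolve_left h4z)

lemma eq_two_mul_mul_add_two (hsq : (z + 2 * c) ^ 2 = 1)
    (h4 : 2 * α + 4 * c * (z - 2) + z * (z - 4) + 4 * z = 1) :
    α = 2 * c * (c + 2) := by
  have h : 2 * (α - 2 * c * (c + 2)) = 0 := by linear_combination h4 - hsq
  exact sub_eq_zero.mp ((mul_eq_zero.mp h).resolve_left two_ne_zero)

end

/-- The integer computation in the proof of Proposition 3.8. -/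
theorem stmt_3 (n : ℕ) (α c x y : ℤ)
    (z : ℤ) (hz : z = 2 * (n : ℤ) + 3)
    (h1 : x = z - 4 - 2 * c)
    (h2 : 2 * α + 4 * y * (z - 2) + (z - 4) ^ 2 = 1)
    (h3 : 2 * z * α - 4 * c ^ 2 * (z - 2) + 2 * z ^ 2 = 2)
    (h4 : 2 * α + 4 * c * (z - 2) + z * (z - 4) + 4 * z = 1) :
    (z + 2 * c) ^ 2 = 1 ∧ α = 2 * c * (c + 2) ∧ y = c + 2 ∧
      ((c = -(n : ℤ) - 1 ∧ x = 4 * (n : ℤ) + 1) ∨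
        (c = -(n : ℤ) - 2 ∧ x = 4 * (n : ℤ) + 3)) := by
  have hz2 : z ≠ 2 := by omega
  have hsq := sq_add_two_mul_eq_one_of_ne_two hz2 h3 h4
  refine ⟨hsq, eq_two_mul_mul_add_two hsq h4, eq_add_two_of_ne_two hz2 h2 h4, ?_⟩
  rcases sq_eq_one_iff.mp hsq with hpos | hneg
  · left; omega
  · right; omega
end

section
/- Let V be a ℚ-vector space with a symmetric ℚ-bilinear form x·y. On triples (r,f,t) ∈ ℚ × V × ℚ define the product (r,f,t)*(r',f',t') = (rr', rf' + r'f, rt' + r't + f·f'), for x ∈ V set ch(x) = (1, x, (x·x)/2), and set χ(r,f,t) = 2r + t. Let ℓ ∈ V satisfy ℓ·ℓ = −4. Then for any f ∈ V and r, t ∈ ℚ, writing F = (r,f,t), the triple χ(F*ch(0))·ch(0) + χ(F*ch(ℓ))·ch(−ℓ) − F*ch(ℓ)*ch(−ℓ) equals (r + f·ℓ + 2t, −(f·ℓ + t)ℓ − f, −2 f·ℓ − 3t). -/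
/-- Cup product of Chern-character triples `(ch₀, ch₁, ∫ch₂)` on a K3 surface. -/
def mukaiMul {V : Type*} [AddCommGroup V] [Module ℚ V]
    (B : V →ₗ[ℚ] V →ₗ[ℚ] ℚ) (x y : ℚ × V × ℚ) : ℚ × V × ℚ :=
  (x.1 * y.1, x.1 • y.2.1 + y.1 • x.2.1, x.1 * y.2.2 + y.1 * x.2.2 + B x.2.1 y.2.1)

/-- Chern character of a line bundle with first Chern class `x`. -/
def chLine {V : Type*} [AddCommGroup V] [Module ℚ V]
    (B : V →ₗ[ℚ] V →ₗ[ℚ] ℚ) (x : V) : ℚ × V × ℚ :=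
  (1, x, B x x / 2)

/-- Euler characteristic via Riemann–Roch on a K3 surface. -/
def chiK3 {V : Type*} [AddCommGroup V] [Module ℚ V] (x : ℚ × V × ℚ) : ℚ :=
  2 * x.1 + x.2.2

/-! Since `ch(ℓ) * ch(-ℓ) = ch(0)` is the unit of the (associative) cup product, the last term
of the transform is just `F`; Riemann–Roch gives `χ(F) = 2r + t` and, using `ℓ·ℓ = -4`,
`χ(F * ch(ℓ)) = t + f·ℓ`. The formula is then a linear combination of `ch(0) = (1, 0, 0)`,
`ch(-ℓ) = (1, -ℓ, -2)` and `F`. -/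

section MukaiMul

variable {V : Type*} [AddCommGroup V] [Module ℚ V] (B : V →ₗ[ℚ] V →ₗ[ℚ] ℚ)

theorem mukaiMul_assoc (x y z : ℚ × V × ℚ) :
    mukaiMul B (mukaiMul B x y) z = mukaiMul B x (mukaiMul B y z) := by
  obtain ⟨r₁, f₁, t₁⟩ := x
  obtain ⟨r₂, f₂, t₂⟩ := y
  obtain ⟨r₃, f₃, t₃⟩ := z
  simp only [mukaiMul, map_add, map_smul, LinearMap.add_apply, LinearMap.smul_apply, smul_eq_mul,
    Prod.mk.injEq]
  refine ⟨by ring, by module, by ring⟩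

theorem chLine_zero : chLine B 0 = (1, 0, 0) := by
  simp [chLine]

theorem chLine_neg (x : V) : chLine B (-x) = (1, -x, B x x / 2) := by
  simp [chLine]

theorem mukaiMul_chLine_zero (x : ℚ × V × ℚ) : mukaiMul B x (chLine B 0) = x := by
  simp [mukaiMul, chLine_zero]

theorem chLine_mul_chLine_neg (x : V) : mukaiMul B (chLine B x) (chLine B (-x)) = chLine B 0 := by
  rw [chLine_zero, chLine_neg]
  simp only [mukaiMul, chLine, map_neg, Prod.mk.injEq]
  refine ⟨by ring, by module, by ring⟩

theorem mukaiMul_mukaiMul_chLine_neg (F : ℚ × V × ℚ) (x : V) :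
    mukaiMul B (mukaiMul B F (chLine B x)) (chLine B (-x)) = F := by
  rw [mukaiMul_assoc, chLine_mul_chLine_neg, mukaiMul_chLine_zero]

theorem chiK3_mukaiMul_chLine (F : ℚ × V × ℚ) (x : V) :
    chiK3 (mukaiMul B F (chLine B x)) = chiK3 F + F.1 * (B x x / 2) + B F.2.1 x := by
  simp only [chiK3, mukaiMul, chLine]
  ring

end MukaiMul

theorem stmt_5_general {V : Type*} [AddCommGroup V] [Module ℚ V]
    (B : V →ₗ[ℚ] V →ₗ[ℚ] ℚ)
    (ℓ : V) (hll : B ℓ ℓ = -4)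
    (f : V) (r t : ℚ) :
    (chiK3 (mukaiMul B (r, f, t) (chLine B (0 : V)))) • chLine B (0 : V) +
      (chiK3 (mukaiMul B (r, f, t) (chLine B ℓ))) • chLine B (-ℓ) -
      mukaiMul B (mukaiMul B (r, f, t) (chLine B ℓ)) (chLine B (-ℓ)) =
    (r + B f ℓ + 2 * t, -(B f ℓ + t) • ℓ - f, -2 * B f ℓ - 3 * t) := by
  rw [mukaiMul_mukaiMul_chLine_neg, mukaiMul_chLine_zero, chiK3_mukaiMul_chLine, chLine_neg,
    chLine_zero, hll]
  simp only [chiK3, Prod.smul_mk, Prod.mk_add_mk, Prod.mk_sub_mk, smul_eq_mul, smul_zero,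
    Prod.mk.injEq]
  refine ⟨by ring, by module, by ring⟩

/-- The Chern character formula of Theorem 2.6: for a K3 surface with a line bundle `L`
with no cohomology (so `ℓ·ℓ = −4`), the transform of `(r, f, t)` is
`(r + f·ℓ + 2t, −(f·ℓ + t)ℓ − f, −2f·ℓ − 3t)`. -/
theorem stmt_5 {V : Type*} [AddCommGroup V] [Module ℚ V]
    (B : V →ₗ[ℚ] V →ₗ[ℚ] ℚ) (hsym : ∀ x y : V, B x y = B y x)
    (ℓ : V) (hll : B ℓ ℓ = -4)
    (f : V) (r t : ℚ) :
    (chiK3 (mukaiMul B (r, f, t) (chLine B (0 : V)))) • chLine B (0 : V) +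
      (chiK3 (mukaiMul B (r, f, t) (chLine B ℓ))) • chLine B (-ℓ) -
      mukaiMul B (mukaiMul B (r, f, t) (chLine B ℓ)) (chLine B (-ℓ)) =
    (r + B f ℓ + 2 * t, -(B f ℓ + t) • ℓ - f, -2 * B f ℓ - 3 * t) :=
  stmt_5_general B ℓ hll f r t
end

section
/- Let Λ be a ℤ-module equipped with a symmetric ℤ-bilinear form, written x·y. Let c₁, c₂, c₃ ∈ Λ satisfy: cᵢ·cᵢ = −2 for all i; for all i ≠ j, if cᵢ ≠ cⱼ then cᵢ·cⱼ ≥ 0; and (c₁+c₂+c₃)·(c₁+c₂+c₃) = −4. Then there is a partition of the index set {1,2,3} into a singleton {i} and a pair {j,k} such that, setting d₁ = cᵢ and d₂ = cⱼ + c_k, one has d₁·d₁ = −2, d₂·d₂ = −2 and d₁·d₂ = 0. -/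
/-!
Expanding `(c₀ + c₁ + c₂)² = −4` with `cᵢ² = −2` shows that the three pairings `cᵢ·cⱼ` sum
to `1`. None of them can come from a repeated class: if `cᵢ = cⱼ`, then `cᵢ·cⱼ = −2` and the
remaining two pairings agree, so the sum would be `−2 + 2m ≠ 1` by parity. Hence the pairings
are non-negative integers summing to `1`: one equals `1`, say `cⱼ·c_k`, and the other two vanish.
Then `(cⱼ + c_k)² = −2 − 2 + 2 = −2` and `cᵢ·(cⱼ + c_k) = 0`.
-/

section SymmetricForm

variable {R M : Type*} [CommRing R] [AddCommGroup M] [Module R M] (B : M →ₗ[R] M →ₗ[R] R)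

theorem apply_add_self_of_symm (hsym : ∀ x y, B x y = B y x) (y z : M) :
    B (y + z) (y + z) = B y y + B z z + 2 * B y z := by
  simp only [map_add, LinearMap.add_apply, hsym z y]
  ring

theorem apply_add_add_self_of_symm (hsym : ∀ x y, B x y = B y x) (x y z : M) :
    B (x + y + z) (x + y + z) =
      B x x + B y y + B z z + 2 * (B x y + B x z + B y z) := by
  simp only [map_add, LinearMap.add_apply, hsym y x, hsym z x, hsym z y]
  ring

end SymmetricForm

section IntegralForm

variable {M : Type*} [AddCommGroup M] [Module ℤ M] (B : M →ₗ[ℤ] M →ₗ[ℤ] ℤ)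

theorem pairings_sum_eq_one (hsym : ∀ x y, B x y = B y x) {x y z : M}
    (hx : B x x = -2) (hy : B y y = -2) (hz : B z z = -2)
    (hsum : B (x + y + z) (x + y + z) = -4) :
    B x y + B x z + B y z = 1 := by
  rw [apply_add_add_self_of_symm B hsym, hx, hy, hz] at hsum
  linarith

theorem pairing_nonneg_of_sum_eq_one {x y z : M} (hy : B y y = -2)
    (hsum : B x y + B x z + B y z = 1) (hne : x ≠ y → 0 ≤ B x y) :
    0 ≤ B x y := by
  rcases eq_or_ne x y with rfl | h
  · omega
  · exact hne h

theorem apply_add_self_eq_neg_two (hsym : ∀ x y, B x y = B y x) {y z : M}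
    (hy : B y y = -2) (hz : B z z = -2) (hyz : B y z = 1) :
    B (y + z) (y + z) = -2 := by
  rw [apply_add_self_of_symm B hsym, hy, hz, hyz]
  norm_num

end IntegralForm

/-- The three-component case of the Appendix Lemma: if `c₁, c₂, c₃` are `(−2)`-classes
with `cᵢ·cⱼ ≥ 0` whenever `cᵢ ≠ cⱼ` (`i ≠ j`) and `(c₁+c₂+c₃)² = −4`, then the index set
splits into a singleton `{i}` and a pair `{j, k}` such that `d₁ = cᵢ` and `d₂ = cⱼ + c_k`
satisfy `d₁² = −2 = d₂²` and `d₁·d₂ = 0`. -/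
theorem stmt_10 {Λ : Type*} [AddCommGroup Λ] [Module ℤ Λ]
    (B : Λ →ₗ[ℤ] Λ →ₗ[ℤ] ℤ) (hsym : ∀ x y : Λ, B x y = B y x)
    (c : Fin 3 → Λ)
    (hsq : ∀ i, B (c i) (c i) = -2)
    (hij : ∀ i j, i ≠ j → c i ≠ c j → 0 ≤ B (c i) (c j))
    (hsum : B (c 0 + c 1 + c 2) (c 0 + c 1 + c 2) = -4) :
    ∃ i j k : Fin 3, i ≠ j ∧ i ≠ k ∧ j ≠ k ∧
      ({i, j, k} : Finset (Fin 3)) = Finset.univ ∧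
      B (c i) (c i) = -2 ∧
      B (c j + c k) (c j + c k) = -2 ∧
      B (c i) (c j + c k) = 0 := by
  have hone := pairings_sum_eq_one B hsym (hsq 0) (hsq 1) (hsq 2) hsum
  have h01 := pairing_nonneg_of_sum_eq_one B (hsq 1) hone (hij 0 1 (by decide))
  have h02 := pairing_nonneg_of_sum_eq_one B (z := c 1) (hsq 2)
    (by rw [← hsym (c 1) (c 2)]; linarith) (hij 0 2 (by decide))
  have h12 := pairing_nonneg_of_sum_eq_one B (z := c 0) (hsq 2)
    (by rw [hsym (c 1) (c 0), hsym (c 2) (c 0)]; linarith) (hij 1 2 (by decide))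
  rcases (by omega : (B (c 1) (c 2) = 1 ∧ B (c 0) (c 1) = 0 ∧ B (c 0) (c 2) = 0) ∨
      (B (c 0) (c 2) = 1 ∧ B (c 0) (c 1) = 0 ∧ B (c 1) (c 2) = 0) ∨
      (B (c 0) (c 1) = 1 ∧ B (c 0) (c 2) = 0 ∧ B (c 1) (c 2) = 0))
    with ⟨h1, h2, h3⟩ | ⟨h1, h2, h3⟩ | ⟨h1, h2, h3⟩
  · exact ⟨0, 1, 2, by decide, by decide, by decide, by decide, hsq 0,
      apply_add_self_eq_neg_two B hsym (hsq 1) (hsq 2) h1, by rw [map_add, h2, h3, add_zero]⟩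
  · exact ⟨1, 0, 2, by decide, by decide, by decide, by decide, hsq 1,
      apply_add_self_eq_neg_two B hsym (hsq 0) (hsq 2) h1,
      by rw [map_add, hsym (c 1) (c 0), h2, h3, add_zero]⟩
  · exact ⟨2, 0, 1, by decide, by decide, by decide, by decide, hsq 2,
      apply_add_self_eq_neg_two B hsym (hsq 0) (hsq 1) h1,
      by rw [map_add, hsym (c 2) (c 0), hsym (c 2) (c 1), h2, h3, add_zero]⟩
end
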